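/- arXiv:2011.08069 — 4 statements merged into one kernel-verified Lean document; each statement's English description precedes it below -/
import Mathlib

section
/- Let X be a type with an adjacency relation adj, and let f : X → ℤ have sensitivity A, i.e. |f x − f x'| ≤ A for all adjacent x, x', where A > 0. Let ε > 0, 0 < δ < 1, and λ > 0 with λ ≥ A/ε. Let t be a real number with t ≥ A and t ≥ λ·ln((exp(A/λ) − 1 + δ)/(2δ)). Define the mechanism M x to be the pushforward of the truncated Laplace measure Lap(λ, −t) under the map u ↦ (f x : ℝ) + t + ⌊u⌋. Then M is (ε, δ)-differentially private: for all adjacent x, x' and every measurable set O ⊆ ℝ, (M x) O ≤ exp(ε)·(M x') O + δ. -/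
open MeasureTheory Real

/-- The Laplace measure with mean 0 and scale `l`: density `u ↦ (1/(2l)) exp(-|u|/l)`
with respect to Lebesgue measure. -/
noncomputable def laplaceMeasure (l : ℝ) : Measure ℝ :=
  volume.withDensity (fun u => ENNReal.ofReal ((1 / (2 * l)) * Real.exp (-|u| / l)))

/-- The Laplace measure with scale `l`, truncated (conditioned) to the interval `(-t, ∞)`. -/
noncomputable def truncLaplace (l t : ℝ) : Measure ℝ :=
  (laplaceMeasure l (Set.Ioi (-t)))⁻¹ • (laplaceMeasure l).restrict (Set.Ioi (-t))

/-!
Changing the input to an adjacent one shifts `f` by an integer `c` with `|c| ≤ A`, and since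
`⌊u + c⌋ = ⌊u⌋ + c` this amounts to translating the noise by `c`. Translation changes the
Laplace density by a factor at most `exp (A / λ) ≤ exp ε`, except that mass may cross the
truncation point `-t`; what crosses lies in `(-t, -t + A]`, whose conditional mass
`(e^{A/λ} - 1) e^{-t/λ} / (2 - e^{-t/λ})` is at most `δ` exactly when
`t ≥ λ log ((e^{A/λ} - 1 + δ) / (2δ))`.
-/

open Set
open scoped ENNReal

noncomputable def laplaceDensity (l u : ℝ) : ℝ := 1 / (2 * l) * exp (-|u| / l)

lemma measurable_laplaceDensity (l : ℝ) :
    Measurable fun u => ENNReal.ofReal (laplaceDensity l u) := by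
  unfold laplaceDensity
  fun_prop

lemma laplaceMeasure_apply (l : ℝ) {s : Set ℝ} (hs : MeasurableSet s) :
    laplaceMeasure l s = ∫⁻ u in s, ENNReal.ofReal (laplaceDensity l u) :=
  withDensity_apply _ hs

lemma laplaceDensity_sub_le {l B c : ℝ} (hl : 0 < l) (hc : |c| ≤ B) (v : ℝ) :
    laplaceDensity l (v - c) ≤ exp (B / l) * laplaceDensity l v := by
  have hdist : |v| - B ≤ |v - c| := by linarith [abs_sub_abs_le_abs_sub v c]
  calc laplaceDensity l (v - c) ≤ 1 / (2 * l) * exp ((B - |v|) / l) := by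
        unfold laplaceDensity
        gcongr
        linarith
    _ = exp (B / l) * laplaceDensity l v := by
        rw [laplaceDensity, mul_left_comm, ← exp_add]
        ring_nf

lemma laplaceMeasure_Ioc_of_nonpos {l a b : ℝ} (hl : 0 < l) (hab : a ≤ b) (hb : b ≤ 0) :
    laplaceMeasure l (Ioc a b) = ENNReal.ofReal ((exp (b / l) - exp (a / l)) / 2) := by
  have hdens : EqOn (fun u => ENNReal.ofReal (laplaceDensity l u))
      (fun u => ENNReal.ofReal (exp (u / l) / (2 * l))) (Ioc a b) := by
    intro u hu
    simp only [laplaceDensity, abs_of_nonpos (hu.2.trans hb), neg_neg]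
    ring_nf
  rw [laplaceMeasure_apply l measurableSet_Ioc, setLIntegral_congr_fun measurableSet_Ioc hdens,
    ← ofReal_integral_eq_lintegral_ofReal (by fun_prop : Continuous _).integrableOn_Ioc
      (ae_of_all _ fun u => by positivity),
    ← intervalIntegral.integral_of_le hab, intervalIntegral.integral_div,
    intervalIntegral.integral_comp_div (f := exp) hl.ne', integral_exp, smul_eq_mul]
  congr 1
  field_simp

lemma laplaceMeasure_Ioi_zero {l : ℝ} (hl : 0 < l) :
    laplaceMeasure l (Ioi 0) = ENNReal.ofReal (1 / 2) := by
  have hrate : -1 / l < 0 := div_neg_of_neg_of_pos (by norm_num) hl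
  have hdens : EqOn (fun u => ENNReal.ofReal (laplaceDensity l u))
      (fun u => ENNReal.ofReal (exp (-1 / l * u) / (2 * l))) (Ioi 0) := by
    intro u hu
    simp only [laplaceDensity, abs_of_pos (mem_Ioi.mp hu)]
    ring_nf
  rw [laplaceMeasure_apply l measurableSet_Ioi, setLIntegral_congr_fun measurableSet_Ioi hdens,
    ← ofReal_integral_eq_lintegral_ofReal ((integrableOn_exp_mul_Ioi hrate 0).div_const _)
      (ae_of_all _ fun u => by positivity),
    integral_div, integral_exp_mul_Ioi hrate, mul_zero, exp_zero]
  congr 1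
  field_simp

lemma laplaceMeasure_Ioi_neg {l t : ℝ} (hl : 0 < l) (ht : 0 ≤ t) :
    laplaceMeasure l (Ioi (-t)) = ENNReal.ofReal (1 - exp (-t / l) / 2) := by
  have hexp : exp (-t / l) ≤ 1 :=
    exp_le_one_iff.mpr (div_nonpos_of_nonpos_of_nonneg (by linarith) hl.le)
  rw [← Ioc_union_Ioi_eq_Ioi (neg_nonpos.mpr ht),
    measure_union (Ioc_disjoint_Ioi le_rfl) measurableSet_Ioi,
    laplaceMeasure_Ioc_of_nonpos hl (neg_nonpos.mpr ht) le_rfl, laplaceMeasure_Ioi_zero hl,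
    zero_div, exp_zero, ← ENNReal.ofReal_add (by linarith) (by norm_num)]
  ring_nf

lemma laplaceMeasure_preimage_add_le {l B c : ℝ} (hl : 0 < l) (hc : |c| ≤ B) {s : Set ℝ}
    (hs : MeasurableSet s) :
    laplaceMeasure l ((· + c) ⁻¹' s) ≤ ENNReal.ofReal (exp (B / l)) * laplaceMeasure l s := by
  have hshift := (measurePreserving_add_right volume c).setLIntegral_comp_preimage_emb
    (measurableEmbedding_addRight c) (fun v => ENNReal.ofReal (laplaceDensity l (v - c))) s
  simp only [add_sub_cancel_right] at hshift
  rw [laplaceMeasure_apply l (measurable_add_const c hs), laplaceMeasure_apply l hs, hshift,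
    ← lintegral_const_mul _ (measurable_laplaceDensity l)]
  refine lintegral_mono fun v => ?_
  rw [← ENNReal.ofReal_mul (exp_nonneg _)]
  exact ENNReal.ofReal_le_ofReal (laplaceDensity_sub_le hl hc v)

lemma truncLaplace_apply (l t : ℝ) {s : Set ℝ} (hs : MeasurableSet s) :
    truncLaplace l t s
      = (laplaceMeasure l (Ioi (-t)))⁻¹ * laplaceMeasure l (s ∩ Ioi (-t)) := by
  rw [truncLaplace, Measure.smul_apply, smul_eq_mul, Measure.restrict_apply hs]

lemma truncLaplace_preimage_add_le {l A c t : ℝ} (hl : 0 < l) (hc : |c| ≤ A) {s : Set ℝ}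
    (hs : MeasurableSet s) :
    truncLaplace l t ((· + c) ⁻¹' s)
      ≤ ENNReal.ofReal (exp (A / l)) * truncLaplace l t s
        + truncLaplace l t (Ioc (-t) (-t + A)) := by
  have hsplit : (· + c) ⁻¹' s ∩ Ioi (-t)
      ⊆ (· + c) ⁻¹' (s ∩ Ioi (-t)) ∪ Ioc (-t) (-t + A) ∩ Ioi (-t) := by
    rintro u ⟨hus, hut⟩
    by_cases h : -t < u + c
    · exact Or.inl ⟨hus, h⟩
    · exact Or.inr ⟨⟨hut, by linarith [neg_abs_le c]⟩, hut⟩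
  have hmass : laplaceMeasure l ((· + c) ⁻¹' s ∩ Ioi (-t))
      ≤ ENNReal.ofReal (exp (A / l)) * laplaceMeasure l (s ∩ Ioi (-t))
        + laplaceMeasure l (Ioc (-t) (-t + A) ∩ Ioi (-t)) :=
    (measure_mono hsplit).trans <| (measure_union_le _ _).trans <|
      add_le_add_left (laplaceMeasure_preimage_add_le hl hc (hs.inter measurableSet_Ioi)) _
  rw [truncLaplace_apply l t (measurable_add_const c hs), truncLaplace_apply l t hs,
    truncLaplace_apply l t measurableSet_Ioc, mul_left_comm, ← mul_add]
  gcongr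

lemma truncLaplace_Ioc_le {l A t δ : ℝ} (hl : 0 < l) (hA : 0 ≤ A) (hAt : A ≤ t)
    (hδ : 0 < δ) (ht : l * log ((exp (A / l) - 1 + δ) / (2 * δ)) ≤ t) :
    truncLaplace l t (Ioc (-t) (-t + A)) ≤ ENNReal.ofReal δ := by
  set a := exp (-t / l) with ha
  have ha1 : a ≤ 1 := exp_le_one_iff.mpr (div_nonpos_of_nonpos_of_nonneg (by linarith) hl.le)
  have hZ : 0 < 1 - a / 2 := by linarith
  have hshifted : exp ((-t + A) / l) = exp (A / l) * a := by rw [ha, ← exp_add]; ring_nf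
  have hkey : a * (exp (A / l) - 1 + δ) ≤ 2 * δ := by
    have hE : 1 ≤ exp (A / l) := one_le_exp (div_nonneg hA hl.le)
    have hR : 0 < (exp (A / l) - 1 + δ) / (2 * δ) := div_pos (by linarith) (by linarith)
    have hlog : log ((exp (A / l) - 1 + δ) / (2 * δ)) ≤ t / l := by
      rw [le_div_iff₀ hl]; linarith
    rw [log_le_iff_le_exp hR, div_le_iff₀ (by linarith)] at hlog
    have hinv : a * exp (t / l) = 1 := by rw [ha, ← exp_add, neg_div, neg_add_cancel, exp_zero]
    calc a * (exp (A / l) - 1 + δ) ≤ a * (exp (t / l) * (2 * δ)) :=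
          mul_le_mul_of_nonneg_left hlog (exp_pos _).le
      _ = 2 * δ := by rw [← mul_assoc, hinv, one_mul]
  rw [truncLaplace_apply l t measurableSet_Ioc, inter_eq_left.mpr Ioc_subset_Ioi_self,
    laplaceMeasure_Ioc_of_nonpos hl (by linarith) (by linarith),
    laplaceMeasure_Ioi_neg hl (hA.trans hAt), ← ENNReal.ofReal_inv_of_pos hZ,
    ← ENNReal.ofReal_mul (inv_nonneg.mpr hZ.le)]
  refine ENNReal.ofReal_le_ofReal ?_
  rw [inv_mul_le_iff₀ hZ, hshifted]
  linarith

lemma intCast_add_floor_eq_comp (m m' : ℤ) (s : ℝ) :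
    (fun u : ℝ => (m : ℝ) + s + (⌊u⌋ : ℝ))
      = (fun u : ℝ => (m' : ℝ) + s + (⌊u⌋ : ℝ)) ∘ (· + ((m - m' : ℤ) : ℝ)) := by
  funext u
  simp only [Function.comp_apply, Int.floor_add_intCast]
  push_cast
  ring

theorem floor_truncated_laplace_mechanism_dp_general
    {X : Type*} (adj : X → X → Prop) (f : X → ℤ) (A ε δ lam t : ℝ)
    (hsens : ∀ x x', adj x x' → |(f x : ℝ) - (f x' : ℝ)| ≤ A)
    (hε : 0 < ε) (hδ0 : 0 < δ) (hlam : 0 < lam)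
    (hlamε : A / ε ≤ lam) (htA : A ≤ t)
    (ht : lam * Real.log ((Real.exp (A / lam) - 1 + δ) / (2 * δ)) ≤ t)
    (M : X → Measure ℝ)
    (hM : ∀ x, M x = (truncLaplace lam t).map (fun u => (f x : ℝ) + t + (⌊u⌋ : ℝ))) :
    ∀ x x', adj x x' → ∀ O : Set ℝ, MeasurableSet O →
      M x O ≤ ENNReal.ofReal (Real.exp ε) * M x' O + ENNReal.ofReal δ := by
  intro x x' hadj O hO
  have hc : |((f x - f x' : ℤ) : ℝ)| ≤ A := by push_cast; exact hsens x x' hadj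
  have hA : 0 ≤ A := (abs_nonneg _).trans hc
  have hAε : A / lam ≤ ε := by
    rw [div_le_iff₀ hlam]
    rwa [div_le_iff₀ hε, mul_comm] at hlamε
  have hmeas : ∀ m : ℤ, Measurable fun u : ℝ => (m : ℝ) + t + (⌊u⌋ : ℝ) := fun m =>
    measurable_const.add (measurable_from_top.comp Int.measurable_floor)
  rw [hM, hM, Measure.map_apply (hmeas _) hO, Measure.map_apply (hmeas _) hO,
    intCast_add_floor_eq_comp (f x) (f x'), preimage_comp]
  calc _ ≤ ENNReal.ofReal (exp (A / lam)) * _ + _ :=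
        truncLaplace_preimage_add_le hlam hc ((hmeas _) hO)
    _ ≤ _ := by
        gcongr
        exact truncLaplace_Ioc_le hlam hA htA hδ0 ht

/-- The noised-floor mechanism `M x = (f x : ℝ) + t + ⌊u⌋`, with `u ~ Lap(λ, -t)`,
is `(ε, δ)`-differentially private when `f` has sensitivity `A`, `λ ≥ A/ε`,
`t ≥ A` and `t ≥ λ ln((e^{A/λ} - 1 + δ)/(2δ))`. -/
theorem floor_truncated_laplace_mechanism_dp
    {X : Type*} (adj : X → X → Prop) (f : X → ℤ) (A ε δ lam t : ℝ)
    (hA : 0 < A) (hsens : ∀ x x', adj x x' → |(f x : ℝ) - (f x' : ℝ)| ≤ A)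
    (hε : 0 < ε) (hδ0 : 0 < δ) (hδ1 : δ < 1) (hlam : 0 < lam)
    (hlamε : A / ε ≤ lam) (htA : A ≤ t)
    (ht : lam * Real.log ((Real.exp (A / lam) - 1 + δ) / (2 * δ)) ≤ t)
    (M : X → Measure ℝ)
    (hM : ∀ x, M x = (truncLaplace lam t).map (fun u => (f x : ℝ) + t + (⌊u⌋ : ℝ))) :
    ∀ x x', adj x x' → ∀ O : Set ℝ, MeasurableSet O →
      M x O ≤ ENNReal.ofReal (Real.exp ε) * M x' O + ENNReal.ofReal δ :=
  floor_truncated_laplace_mechanism_dp_general adj f A ε δ lam t hsens hε hδ0 hlam hlamε htA ht M hM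
end

section
/- Let λ > 0, t ≥ 0, A > 0, ε > 0 with λ ≥ A/ε, and let a, b be real numbers with |a − b| ≤ A. For c : ℝ, let M_c denote the pushforward of the truncated Laplace measure Lap(λ, −t) under the map u ↦ c + u. Then for every measurable set O ⊆ ℝ contained in the interval (a + A − t, ∞), one has (M_a) O ≤ exp(ε)·(M_b) O. -/
open MeasureTheory Real

/-!
On the part of `ℝ` where neither shifted copy of `Lap(λ, -t)` is cut off by the truncation,
both are the same multiple of a translate of the Laplace density, and translating the density
by `|a - b| ≤ A` changes it by a factor at most `exp (A / λ) ≤ exp ε`.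
-/

lemma laplaceMeasure_preimage_add_left (l c : ℝ) {O : Set ℝ} (hO : MeasurableSet O) :
    laplaceMeasure l ((c + ·) ⁻¹' O) =
      ∫⁻ v in O, ENNReal.ofReal (1 / (2 * l) * exp (-|v - c| / l)) := by
  rw [laplaceMeasure, withDensity_apply _ (measurable_const_add c hO),
    ← (measurePreserving_add_left volume c).setLIntegral_comp_preimage_emb
      (MeasurableEquiv.addLeft c).measurableEmbedding
      (fun v => ENNReal.ofReal (1 / (2 * l) * exp (-|v - c| / l)))]
  simp only [add_sub_cancel_left]

lemma truncLaplace_map_add_left_apply (l t c : ℝ) {O : Set ℝ} (hO : MeasurableSet O)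
    (hsub : O ⊆ Set.Ioi (c - t)) :
    (truncLaplace l t).map (c + ·) O =
      (laplaceMeasure l (Set.Ioi (-t)))⁻¹ *
        ∫⁻ v in O, ENNReal.ofReal (1 / (2 * l) * exp (-|v - c| / l)) := by
  have hpre : (c + ·) ⁻¹' O ⊆ Set.Ioi (-t) := fun u hu => by
    have := hsub hu
    simp only [Set.mem_Ioi] at this ⊢
    linarith
  rw [Measure.map_apply (measurable_const_add c) hO, truncLaplace, Measure.smul_apply,
    smul_eq_mul, Measure.restrict_apply (measurable_const_add c hO),
    Set.inter_eq_self_of_subset_left hpre, laplaceMeasure_preimage_add_left l c hO]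

lemma exp_neg_abs_sub_div_le {l : ℝ} (hl : 0 ≤ l) (v a b : ℝ) :
    exp (-|v - a| / l) ≤ exp (|a - b| / l) * exp (-|v - b| / l) := by
  rw [← exp_add, exp_le_exp, ← add_div]
  gcongr
  have := abs_sub_abs_le_abs_sub (v - b) (v - a)
  rw [sub_sub_sub_cancel_left] at this
  linarith

lemma truncLaplace_map_add_left_le {l : ℝ} (hl : 0 ≤ l) (t a b : ℝ) {O : Set ℝ}
    (hO : MeasurableSet O) (ha : O ⊆ Set.Ioi (a - t)) (hb : O ⊆ Set.Ioi (b - t)) :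
    (truncLaplace l t).map (a + ·) O ≤
      ENNReal.ofReal (exp (|a - b| / l)) * (truncLaplace l t).map (b + ·) O := by
  rw [truncLaplace_map_add_left_apply l t a hO ha, truncLaplace_map_add_left_apply l t b hO hb,
    mul_left_comm]
  refine mul_le_mul_right ?_ _
  rw [← lintegral_const_mul _ (by fun_prop)]
  refine setLIntegral_mono' hO fun v _ => ?_
  rw [← ENNReal.ofReal_mul (exp_nonneg _), mul_left_comm]
  gcongr
  exact exp_neg_abs_sub_div_le hl v a b

theorem shifted_truncLaplace_ratio_bound_general
    (lam t A ε : ℝ) (hlam : 0 < lam) (hε : 0 < ε)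
    (hlamε : A / ε ≤ lam) (a b : ℝ) (hab : |a - b| ≤ A)
    (O : Set ℝ) (hO : MeasurableSet O) (hsub : O ⊆ Set.Ioi (a + A - t)) :
    (truncLaplace lam t).map (fun u => a + u) O ≤
      ENNReal.ofReal (Real.exp ε) * (truncLaplace lam t).map (fun u => b + u) O := by
  obtain ⟨hab_ge, hab_le⟩ := abs_le.mp hab
  have hAlam : A / lam ≤ ε := by
    rw [div_le_iff₀ hε] at hlamε
    rw [div_le_iff₀ hlam]
    linarith
  have hexp : exp (|a - b| / lam) ≤ exp ε :=
    exp_le_exp.mpr ((div_le_div_of_nonneg_right hab hlam.le).trans hAlam)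
  have ha : O ⊆ Set.Ioi (a - t) := hsub.trans (Set.Ioi_subset_Ioi (by linarith))
  have hb : O ⊆ Set.Ioi (b - t) := hsub.trans (Set.Ioi_subset_Ioi (by linarith))
  calc (truncLaplace lam t).map (fun u => a + u) O
      ≤ ENNReal.ofReal (exp (|a - b| / lam)) * (truncLaplace lam t).map (fun u => b + u) O :=
        truncLaplace_map_add_left_le hlam.le t a b hO ha hb
    _ ≤ ENNReal.ofReal (exp ε) * (truncLaplace lam t).map (fun u => b + u) O := by
        gcongr

/-- Pointwise `e^ε`-ratio bound for shifted truncated Laplace measures, away from the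
problematic left boundary: if `|a - b| ≤ A`, `λ ≥ A/ε`, then for every measurable
`O ⊆ (a + A - t, ∞)` we have `M_a O ≤ e^ε · M_b O`, where `M_c` is the pushforward
of `Lap(λ, -t)` under `u ↦ c + u`. -/
theorem shifted_truncLaplace_ratio_bound
    (lam t A ε : ℝ) (hlam : 0 < lam) (ht : 0 ≤ t) (hA : 0 < A) (hε : 0 < ε)
    (hlamε : A / ε ≤ lam) (a b : ℝ) (hab : |a - b| ≤ A)
    (O : Set ℝ) (hO : MeasurableSet O) (hsub : O ⊆ Set.Ioi (a + A - t)) :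
    (truncLaplace lam t).map (fun u => a + u) O ≤
      ENNReal.ofReal (Real.exp ε) * (truncLaplace lam t).map (fun u => b + u) O :=
  shifted_truncLaplace_ratio_bound_general lam t A ε hlam hε hlamε a b hab O hO hsub
end

section
/- Correctness of the PIR query deduplication (folding) transformation: let N be a natural number, S a finite set of indices in Fin N (the L-tile indices under a common M-tile), and m : Fin N with m ∉ S (the M-tile index). For a query Q : Fin N → ZMod 2, define fold(Q) : Fin N → ZMod 2 by fold(Q)(m) = Q m + ∑_{j ∈ S} Q j, fold(Q)(j) = 0 for j ∈ S, and fold(Q)(k) = Q k for all other k. Then for any Q : Fin N → ZMod 2 and any i ∈ S, fold(Q + Pi.single i 1) = fold(Q) + Pi.single m 1. That is, if two query shares differ exactly in one bit at an index i ∈ S, then their folded versions differ exactly in the bit at index m. -/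
/-- The deduplication (folding) transformation on PIR queries: XOR the bits at the
indices in `S` into position `m`, zero out the bits at `S`, and leave the rest. -/
def pirFold {N : ℕ} (S : Finset (Fin N)) (m : Fin N) (Q : Fin N → ZMod 2) :
    Fin N → ZMod 2 :=
  fun k => if k = m then Q m + ∑ j ∈ S, Q j else if k ∈ S then 0 else Q k

section PirFold

variable {N : ℕ} (S : Finset (Fin N)) (m : Fin N)

theorem pirFold_add (Q R : Fin N → ZMod 2) :
    pirFold S m (Q + R) = pirFold S m Q + pirFold S m R := by
  funext k
  simp only [pirFold, Pi.add_apply, Finset.sum_add_distrib]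
  split_ifs <;> ring

variable {S m}

theorem pirFold_single_of_mem (hm : m ∉ S) {i : Fin N} (hi : i ∈ S) (a : ZMod 2) :
    pirFold S m (Pi.single i a) = Pi.single m a := by
  have him : i ≠ m := ne_of_mem_of_not_mem hi hm
  funext k
  by_cases hkm : k = m
  · subst hkm
    simp [pirFold, Pi.single_apply, him.symm, hi]
  · by_cases hkS : k ∈ S
    · simp [pirFold, hkm, hkS]
    · have hki : k ≠ i := (ne_of_mem_of_not_mem hi hkS).symm
      simp [pirFold, hkm, hkS, hki]

end PirFold

/-- Correctness of PIR query deduplication: if two query shares differ exactly in one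
bit at an index `i ∈ S`, then their folded versions differ exactly in the bit at `m`. -/
theorem pirFold_single_flip (N : ℕ) (S : Finset (Fin N)) (m : Fin N) (hm : m ∉ S)
    (Q : Fin N → ZMod 2) (i : Fin N) (hi : i ∈ S) :
    pirFold S m (Q + Pi.single i 1) = pirFold S m Q + Pi.single m 1 := by
  rw [pirFold_add, pirFold_single_of_mem hm hi]
end

section
/- Response preservation under PIR query deduplication: let N be a natural number, let V be an additive commutative group that is a module over ZMod 2, let D : Fin N → V, let S be a finite set of indices in Fin N and m : Fin N with m ∉ S, and suppose D j = D m for all j ∈ S (the blocks at S are duplicates of the block at m). For a query Q : Fin N → ZMod 2, define fold(Q) : Fin N → ZMod 2 by fold(Q)(m) = Q m + ∑_{j ∈ S} Q j, fold(Q)(j) = 0 for j ∈ S, and fold(Q)(k) = Q k for all other k. Then the server's response is unchanged by folding: ∑ k, fold(Q) k • D k = ∑ k, Q k • D k. -/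
section

variable {ι R M : Type*} [Fintype ι] [DecidableEq ι] [Ring R] [AddCommGroup M] [Module R M]

theorem Fintype.linearCombination_single_sub_single (D : ι → M) (m j : ι) :
    Fintype.linearCombination R D (Pi.single m 1 - Pi.single j 1) = D m - D j := by
  simp

theorem Fintype.linearCombination_add_sum_smul_single_sub_single {D : ι → M} {S : Finset ι}
    {m : ι} (hdup : ∀ j ∈ S, D j = D m) (Q c : ι → R) :
    Fintype.linearCombination R D (Q + ∑ j ∈ S, c j • (Pi.single m 1 - Pi.single j 1)) =
      Fintype.linearCombination R D Q := by
  rw [map_add, map_sum, add_eq_left]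
  refine Finset.sum_eq_zero fun j hj => ?_
  rw [map_smul, Fintype.linearCombination_single_sub_single, hdup j hj, sub_self, smul_zero]

end

theorem pirFold_eq_add_sum_smul_single_sub_single {N : ℕ} {S : Finset (Fin N)} {m : Fin N}
    (hm : m ∉ S) (Q : Fin N → ZMod 2) :
    pirFold S m Q = Q + ∑ j ∈ S, Q j • (Pi.single m 1 - Pi.single j 1) := by
  funext k
  simp only [pirFold, Pi.add_apply, Finset.sum_apply, Pi.smul_apply, Pi.sub_apply,
    Pi.single_apply, smul_eq_mul, mul_sub, Finset.sum_sub_distrib, mul_ite, mul_one, mul_zero,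
    Finset.sum_ite_eq]
  by_cases hkm : k = m
  · subst hkm
    simp [hm]
  · by_cases hkS : k ∈ S <;> simp [hkm, hkS, CharTwo.add_self_eq_zero]

/-- Response preservation under PIR query deduplication: if the blocks at indices in `S`
are duplicates of the block at `m ∉ S`, then the server's response to the folded query
equals its response to the original query. -/
theorem pirFold_response_eq (N : ℕ) (V : Type*) [AddCommGroup V] [Module (ZMod 2) V]
    (D : Fin N → V) (S : Finset (Fin N)) (m : Fin N) (hm : m ∉ S)
    (hdup : ∀ j ∈ S, D j = D m) (Q : Fin N → ZMod 2) :
    ∑ k, pirFold S m Q k • D k = ∑ k, Q k • D k := by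
  simpa only [Fintype.linearCombination_apply, ← pirFold_eq_add_sum_smul_single_sub_single hm]
    using Fintype.linearCombination_add_sum_smul_single_sub_single (R := ZMod 2) hdup Q Q
end
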